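/- arXiv:2108.09514 — 4 statements merged into one kernel-verified Lean document; each statement's English description precedes it below -/
import Mathlib

section
/- For any real p with 1 < p ≤ 2, there is a constant C(p) > 0 such that for all vectors s, r in R^n, the Euclidean norm of |s|^{p-2}s − |r|^{p-2}r is at most C(p)·|s − r|^{p-1}. -/
open Real

/-- Concavity estimate for `x ^ q` with `0 ≤ q ≤ 1`. -/
lemma aux_concave (q b t : ℝ) (hq0 : 0 ≤ q) (hq1 : q ≤ 1) (hb : 0 < b) (ht : 0 ≤ t) :
    (b + t) ^ q ≤ b ^ q + q * t * b ^ (q - 1) := by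
  have hbt : b + t = b * (1 + t / b) := by field_simp
  have h1 : (0:ℝ) ≤ 1 + t / b := by positivity
  have h2 : (1 + t / b) ^ q ≤ 1 + q * (t / b) :=
    rpow_one_add_le_one_add_mul_self (by linarith [div_nonneg ht hb.le]) hq0 hq1
  calc (b + t) ^ q = b ^ q * (1 + t / b) ^ q := by
        rw [hbt, Real.mul_rpow hb.le h1]
    _ ≤ b ^ q * (1 + q * (t / b)) := by
        exact mul_le_mul_of_nonneg_left h2 (Real.rpow_nonneg hb.le q)
    _ = b ^ q + q * t * (b ^ q / b) := by field_simp
    _ = b ^ q + q * t * b ^ (q - 1) := by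
        rw [Real.rpow_sub_one hb.ne']

/-- Key scalar estimate. -/
lemma aux_key (q b t : ℝ) (hq0 : 0 ≤ q) (hq1 : q < 1) (hb : 0 < b) (ht : 0 ≤ t) :
    (b ^ (-q) - (b + t) ^ (-q)) * b ≤ t ^ (1 - q) := by
  rcases eq_or_lt_of_le ht with rfl | htpos
  · simp only [add_zero, sub_self, zero_mul]
    exact Real.rpow_nonneg le_rfl _
  have ha : 0 < b + t := by linarith
  rcases le_or_gt b t with hbt | htb
  · -- b ≤ t : crude bound
    have h1 : (b ^ (-q) - (b + t) ^ (-q)) * b ≤ b ^ (-q) * b := by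
      have := Real.rpow_nonneg ha.le (-q)
      nlinarith
    have h2 : b ^ (-q) * b = b ^ (1 - q) := by
      rw [show (1:ℝ) - q = -q + 1 by ring, Real.rpow_add_one hb.ne']
    have h3 : b ^ (1 - q) ≤ t ^ (1 - q) :=
      Real.rpow_le_rpow hb.le hbt (by linarith)
    calc (b ^ (-q) - (b + t) ^ (-q)) * b ≤ b ^ (-q) * b := h1
      _ = b ^ (1 - q) := h2
      _ ≤ t ^ (1 - q) := h3
  · -- t < b : use concavity
    set A := (b + t) ^ q with hA
    set B := b ^ q with hB
    have hApos : 0 < A := Real.rpow_pos_of_pos ha q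
    have hBpos : 0 < B := Real.rpow_pos_of_pos hb q
    have hBA : B ≤ A := Real.rpow_le_rpow hb.le (by linarith) hq0
    have hbern : A ≤ B + q * t * b ^ (q - 1) := aux_concave q b t hq0 hq1.le hb ht
    have hAinv : (b + t) ^ (-q) = A⁻¹ := by rw [Real.rpow_neg ha.le]
    have hBinv : b ^ (-q) = B⁻¹ := by rw [Real.rpow_neg hb.le]
    have hstep : (B⁻¹ - A⁻¹) * b ≤ q * t * b ^ (q - 1) * b / (B * B) := by
      have h1 : B⁻¹ - A⁻¹ = (A - B) / (B * A) := inv_sub_inv hBpos.ne' hApos.ne'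
      rw [h1]
      have h2 : (A - B) / (B * A) ≤ (q * t * b ^ (q - 1)) / (B * B) :=
        div_le_div₀ (by positivity) (by linarith) (by positivity)
          (mul_le_mul_of_nonneg_left hBA hBpos.le)
      calc (A - B) / (B * A) * b ≤ (q * t * b ^ (q - 1)) / (B * B) * b :=
            mul_le_mul_of_nonneg_right h2 hb.le
        _ = q * t * b ^ (q - 1) * b / (B * B) := by ring
    have hident : q * t * b ^ (q - 1) * b / (B * B) = q * t * b ^ (-q) := by
      have hBne : b ^ q ≠ 0 := (Real.rpow_pos_of_pos hb q).ne'
      have e1 : b ^ (q - 1) * b = b ^ q := by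
        rw [Real.rpow_sub_one hb.ne']; field_simp
      rw [hB, Real.rpow_neg hb.le, show q * t * b ^ (q - 1) * b = q * t * (b ^ (q - 1) * b) by ring,
        e1]
      field_simp
    have hfin : q * t * b ^ (-q) ≤ t ^ (1 - q) := by
      have h4 : b ^ (-q) ≤ t ^ (-q) :=
        Real.rpow_le_rpow_of_nonpos htpos htb.le (by linarith)
      have h5 : t * t ^ (-q) = t ^ (1 - q) := by
        rw [show (1:ℝ) - q = -q + 1 by ring, Real.rpow_add_one htpos.ne']; ring
      have hbq : 0 ≤ b ^ (-q) := Real.rpow_nonneg hb.le _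
      have h6 : q * t * b ^ (-q) ≤ t * b ^ (-q) := by
        nlinarith [mul_nonneg (mul_nonneg (by linarith : (0:ℝ) ≤ 1 - q) htpos.le) hbq]
      have h7 : t * b ^ (-q) ≤ t * t ^ (-q) := mul_le_mul_of_nonneg_left h4 htpos.le
      rw [h5] at h7; linarith
    rw [hBinv, hAinv]
    calc (B⁻¹ - A⁻¹) * b ≤ q * t * b ^ (q - 1) * b / (B * B) := hstep
      _ = q * t * b ^ (-q) := hident
      _ ≤ t ^ (1 - q) := hfin

/-- Main estimate under the wlog assumption `‖r‖ ≤ ‖s‖`. -/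
lemma aux_main (p : ℝ) (hp1 : 1 < p) (hp2 : p ≤ 2) (n : ℕ)
    (s r : EuclideanSpace ℝ (Fin n)) (hle : ‖r‖ ≤ ‖s‖) :
    ‖(‖s‖ ^ (p - 2)) • s - (‖r‖ ^ (p - 2)) • r‖ ≤ 3 * ‖s - r‖ ^ (p - 1) := by
  set a := ‖s‖ with haa
  set b := ‖r‖ with hbb
  set d := ‖s - r‖ with hdd
  have ha0 : 0 ≤ a := norm_nonneg _
  have hb0 : 0 ≤ b := norm_nonneg _
  have hd0 : 0 ≤ d := norm_nonneg _
  have hp10 : 0 < p - 1 := by linarith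
  rcases eq_or_lt_of_le ha0 with ha | hapos
  · -- a = 0, hence s = r = 0
    have hs0 : s = 0 := by rwa [haa, eq_comm, norm_eq_zero] at ha
    have hr0 : r = 0 := by
      have : b = 0 := le_antisymm (by rw [← ha] at hle; exact hle) hb0
      rwa [hbb, norm_eq_zero] at this
    subst hs0; subst hr0
    simp only [smul_zero, sub_zero, norm_zero, sub_self]
    positivity
  rcases eq_or_lt_of_le hb0 with hb | hbpos
  · -- b = 0, hence r = 0
    have hr0 : r = 0 := by rwa [hbb, eq_comm, norm_eq_zero] at hb
    have hda : d = a := by rw [hdd, hr0, sub_zero, ← haa]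
    have hsm : (b ^ (p - 2)) • r = 0 := by rw [hr0, smul_zero]
    rw [hsm, sub_zero, norm_smul, Real.norm_eq_abs,
      abs_of_nonneg (Real.rpow_nonneg ha0 _), ← haa, hda]
    have hkey2 : a ^ (p - 2) * a = a ^ (p - 1) := by
      rw [show p - 1 = p - 2 + 1 by ring, Real.rpow_add_one hapos.ne']
    rw [hkey2]
    nlinarith [Real.rpow_nonneg ha0 (p - 1)]
  -- main case : 0 < b ≤ a
  have hdecomp : (a ^ (p - 2)) • s - (b ^ (p - 2)) • r
      = (a ^ (p - 2)) • (s - r) + (a ^ (p - 2) - b ^ (p - 2)) • r := by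
    module
  have hterm : ‖(a ^ (p - 2)) • s - (b ^ (p - 2)) • r‖
      ≤ a ^ (p - 2) * d + (b ^ (p - 2) - a ^ (p - 2)) * b := by
    rw [hdecomp]
    refine (norm_add_le _ _).trans ?_
    rw [norm_smul, norm_smul, Real.norm_eq_abs, Real.norm_eq_abs,
      abs_of_nonneg (Real.rpow_nonneg ha0 _), ← hdd, ← hbb,
      abs_sub_comm, abs_of_nonneg (by
        have := Real.rpow_le_rpow_of_nonpos hbpos hle (by linarith : p - 2 ≤ 0)
        linarith)]
  -- term 1 : a ^ (p-2) * d ≤ 2 * d ^ (p-1)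
  have hd2a : d ≤ 2 * a := by
    have := norm_sub_le s r
    rw [← haa, ← hbb, ← hdd] at this
    linarith
  have hterm1 : a ^ (p - 2) * d ≤ 2 * d ^ (p - 1) := by
    have h1 : d = d ^ (p - 1) * d ^ (2 - p) := by
      rw [← Real.rpow_add' hd0 (by norm_num)]
      norm_num
    have h2 : d ^ (2 - p) ≤ (2 * a) ^ (2 - p) :=
      Real.rpow_le_rpow hd0 hd2a (by linarith)
    have h3 : (2 * a) ^ (2 - p) = 2 ^ (2 - p) * a ^ (2 - p) :=
      Real.mul_rpow (by norm_num) ha0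
    have h4 : (2:ℝ) ^ (2 - p) ≤ 2 ^ (1:ℝ) :=
      Real.rpow_le_rpow_of_exponent_le (by norm_num) (by linarith)
    rw [Real.rpow_one] at h4
    have h5 : a ^ (p - 2) * a ^ (2 - p) = 1 := by
      rw [← Real.rpow_add hapos]; norm_num
    calc a ^ (p - 2) * d = a ^ (p - 2) * (d ^ (p - 1) * d ^ (2 - p)) := by rw [← h1]
      _ ≤ a ^ (p - 2) * (d ^ (p - 1) * (2 * a ^ (2 - p))) := by
          have hdp1 : 0 ≤ d ^ (p - 1) := Real.rpow_nonneg hd0 _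
          have hap2 : 0 ≤ a ^ (p - 2) := Real.rpow_nonneg ha0 _
          have hle2 : d ^ (2 - p) ≤ 2 * a ^ (2 - p) := by
            calc d ^ (2 - p) ≤ 2 ^ (2 - p) * a ^ (2 - p) := by rw [← h3]; exact h2
              _ ≤ 2 * a ^ (2 - p) := by
                  have := Real.rpow_nonneg ha0 (2 - p)
                  nlinarith
          exact mul_le_mul_of_nonneg_left
            (mul_le_mul_of_nonneg_left hle2 hdp1) hap2
      _ = 2 * d ^ (p - 1) * (a ^ (p - 2) * a ^ (2 - p)) := by ring
      _ = 2 * d ^ (p - 1) := by rw [h5]; ring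
  -- term 2
  have hterm2 : (b ^ (p - 2) - a ^ (p - 2)) * b ≤ d ^ (p - 1) := by
    have ht0 : 0 ≤ a - b := by linarith
    have hkey := aux_key (2 - p) b (a - b) (by linarith) (by linarith) hbpos ht0
    have hab : b + (a - b) = a := by ring
    rw [hab] at hkey
    have hq1 : -(2 - p) = p - 2 := by ring
    have hq2 : 1 - (2 - p) = p - 1 := by ring
    rw [hq1, hq2] at hkey
    have habd : a - b ≤ d := by
      have := norm_sub_norm_le s r
      rw [← haa, ← hbb, ← hdd] at this
      linarith
    have : (a - b) ^ (p - 1) ≤ d ^ (p - 1) :=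
      Real.rpow_le_rpow ht0 habd hp10.le
    linarith
  have hdp1 : 0 ≤ d ^ (p - 1) := Real.rpow_nonneg hd0 _
  calc ‖(a ^ (p - 2)) • s - (b ^ (p - 2)) • r‖
      ≤ a ^ (p - 2) * d + (b ^ (p - 2) - a ^ (p - 2)) * b := hterm
    _ ≤ 2 * d ^ (p - 1) + d ^ (p - 1) := add_le_add hterm1 hterm2
    _ = 3 * d ^ (p - 1) := by ring

/-- For `1 < p ≤ 2` there is `C(p) > 0` so that for all `s, r ∈ ℝⁿ`,
`| |s|^{p-2}s − |r|^{p-2}r | ≤ C(p) |s − r|^{p-1}`. -/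
theorem stmt2 (p : ℝ) (hp1 : 1 < p) (hp2 : p ≤ 2) :
    ∃ C : ℝ, 0 < C ∧ ∀ (n : ℕ) (s r : EuclideanSpace ℝ (Fin n)),
      ‖(‖s‖ ^ (p - 2)) • s - (‖r‖ ^ (p - 2)) • r‖ ≤ C * ‖s - r‖ ^ (p - 1) := by
  refine ⟨3, by norm_num, fun n s r => ?_⟩
  rcases le_total ‖r‖ ‖s‖ with h | h
  · exact aux_main p hp1 hp2 n s r h
  · have := aux_main p hp1 hp2 n r s h
    rwa [norm_sub_rev, norm_sub_rev r s] at this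
end

section
/- For any real p > 2 and all vectors s, r in R^n, the Euclidean norm of |r|^{p-2}r − |s|^{p-2}s is at most (p−1)·|r − s|·(|s|^{p-2} + |r|^{p-2}). -/
open Real

/-- Key scalar inequality: for `0 ≤ b ≤ a` and `0 < α`,
`(a^α - b^α) * b ≤ α * (a - b) * (a^α + b^α)`. -/
lemma key_ineq {a b α : ℝ} (hb : 0 ≤ b) (hba : b ≤ a) (hα : 0 < α) :
    (a ^ α - b ^ α) * b ≤ α * (a - b) * (a ^ α + b ^ α) := by
  have ha : 0 ≤ a := hb.trans hba
  have hab : b ^ α ≤ a ^ α := Real.rpow_le_rpow hb hba hα.le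
  rcases le_or_gt 1 α with h1 | h1
  · -- convex case
    rcases eq_or_lt_of_le ha with rfl | ha0
    · have : b = 0 := le_antisymm hba hb
      simp [this]
    · have hs : -1 ≤ b / a - 1 := by
        have : 0 ≤ b / a := div_nonneg hb ha0.le
        linarith
      have hber := one_add_mul_self_le_rpow_one_add hs h1
      have hrw : (1 + (b / a - 1)) = b / a := by ring
      rw [hrw, Real.div_rpow hb ha0.le] at hber
      -- hber : 1 + α * (b/a - 1) ≤ b^α / a^α
      have hA : (0:ℝ) < a ^ α := Real.rpow_pos_of_pos ha0 α
      have key : a * (a ^ α - b ^ α) ≤ α * (a - b) * a ^ α := by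
        have h2 : (1 + α * (b / a - 1)) * a ^ α ≤ (b ^ α / a ^ α) * a ^ α :=
          mul_le_mul_of_nonneg_right hber hA.le
        rw [div_mul_cancel₀ _ hA.ne'] at h2
        have h3 : (1 + α * (b / a - 1)) * a ^ α * a ≤ b ^ α * a :=
          mul_le_mul_of_nonneg_right h2 ha0.le
        have h4 : (1 + α * (b / a - 1)) * a = a + α * (b - a) := by
          field_simp
        nlinarith [h3, hA.le]
      have hbz : (a ^ α - b ^ α) * b ≤ (a ^ α - b ^ α) * a :=
        mul_le_mul_of_nonneg_left hba (by linarith)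
      nlinarith [mul_nonneg (mul_nonneg hα.le (by linarith : (0:ℝ) ≤ a - b))
        (Real.rpow_nonneg hb α)]
  · -- concave case
    rcases eq_or_lt_of_le hb with rfl | hb0
    · simp
      positivity
    · have hs : -1 ≤ a / b - 1 := by
        have : 0 ≤ a / b := div_nonneg ha hb0.le
        linarith
      have hber := rpow_one_add_le_one_add_mul_self hs hα.le h1.le
      have hrw : (1 + (a / b - 1)) = a / b := by ring
      rw [hrw, Real.div_rpow ha hb0.le] at hber
      -- hber : a^α / b^α ≤ 1 + α * (a/b - 1)
      have hB : (0:ℝ) < b ^ α := Real.rpow_pos_of_pos hb0 α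
      have key : b * (a ^ α - b ^ α) ≤ α * (a - b) * b ^ α := by
        have h2 : (a ^ α / b ^ α) * b ^ α ≤ (1 + α * (a / b - 1)) * b ^ α :=
          mul_le_mul_of_nonneg_right hber hB.le
        rw [div_mul_cancel₀ _ hB.ne'] at h2
        have h3 : a ^ α * b ≤ (1 + α * (a / b - 1)) * b ^ α * b :=
          mul_le_mul_of_nonneg_right h2 hb0.le
        have h4 : (1 + α * (a / b - 1)) * b = b + α * (a - b) := by
          field_simp
        nlinarith [h3, hB.le]
      nlinarith [mul_nonneg (mul_nonneg hα.le (by linarith : (0:ℝ) ≤ a - b))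
        (Real.rpow_nonneg ha α)]

/-- For `p > 2` and all `r, s ∈ ℝⁿ`,
`| |r|^{p-2}r − |s|^{p-2}s | ≤ (p−1) |r − s| (|s|^{p-2} + |r|^{p-2})`. -/
theorem stmt3 (n : ℕ) (p : ℝ) (hp : 2 < p) (r s : EuclideanSpace ℝ (Fin n)) :
    ‖(‖r‖ ^ (p - 2)) • r - (‖s‖ ^ (p - 2)) • s‖ ≤
      (p - 1) * ‖r - s‖ * (‖s‖ ^ (p - 2) + ‖r‖ ^ (p - 2)) := by
  set α := p - 2 with hαdef
  have hα : 0 < α := by simp [hαdef]; linarith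
  set a := ‖r‖ with hadef
  set b := ‖s‖ with hbdef
  have ha : 0 ≤ a := norm_nonneg r
  have hb : 0 ≤ b := norm_nonneg s
  have hA : 0 ≤ a ^ α := Real.rpow_nonneg ha α
  have hB : 0 ≤ b ^ α := Real.rpow_nonneg hb α
  have hd : |a - b| ≤ ‖r - s‖ := abs_norm_sub_norm_le r s
  have hdn : 0 ≤ ‖r - s‖ := norm_nonneg _
  rcases le_total b a with hba | hab
  · -- a ≥ b : decompose with s
    have hdecomp : (a ^ α) • r - (b ^ α) • s = (a ^ α) • (r - s) + (a ^ α - b ^ α) • s := by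
      rw [smul_sub, sub_smul]; abel
    rw [hdecomp]
    calc ‖(a ^ α) • (r - s) + (a ^ α - b ^ α) • s‖
        ≤ ‖(a ^ α) • (r - s)‖ + ‖(a ^ α - b ^ α) • s‖ := norm_add_le _ _
      _ = a ^ α * ‖r - s‖ + |a ^ α - b ^ α| * b := by
          rw [norm_smul, norm_smul, Real.norm_eq_abs, Real.norm_eq_abs,
            abs_of_nonneg hA]
      _ ≤ a ^ α * ‖r - s‖ + α * ‖r - s‖ * (a ^ α + b ^ α) := by
          have hab' : b ^ α ≤ a ^ α := Real.rpow_le_rpow hb hba hα.le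
          have h1 : |a ^ α - b ^ α| * b ≤ α * (a - b) * (a ^ α + b ^ α) := by
            rw [abs_of_nonneg (by linarith)]
            exact key_ineq hb hba hα
          have h2 : a - b ≤ ‖r - s‖ := (le_abs_self _).trans hd
          have h3 : α * (a - b) * (a ^ α + b ^ α) ≤ α * ‖r - s‖ * (a ^ α + b ^ α) := by
            apply mul_le_mul_of_nonneg_right _ (by linarith)
            exact mul_le_mul_of_nonneg_left h2 hα.le
          linarith
      _ ≤ (p - 1) * ‖r - s‖ * (b ^ α + a ^ α) := by
          have hp1 : p - 1 = α + 1 := by rw [hαdef]; ring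
          rw [hp1]
          nlinarith [mul_nonneg hdn hB]
  · -- b ≥ a : decompose with r
    have hdecomp : (a ^ α) • r - (b ^ α) • s = (b ^ α) • (r - s) + (a ^ α - b ^ α) • r := by
      rw [smul_sub, sub_smul]; abel
    rw [hdecomp]
    calc ‖(b ^ α) • (r - s) + (a ^ α - b ^ α) • r‖
        ≤ ‖(b ^ α) • (r - s)‖ + ‖(a ^ α - b ^ α) • r‖ := norm_add_le _ _
      _ = b ^ α * ‖r - s‖ + |a ^ α - b ^ α| * a := by
          rw [norm_smul, norm_smul, Real.norm_eq_abs, Real.norm_eq_abs,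
            abs_of_nonneg hB]
      _ ≤ b ^ α * ‖r - s‖ + α * ‖r - s‖ * (a ^ α + b ^ α) := by
          have hab' : a ^ α ≤ b ^ α := Real.rpow_le_rpow ha hab hα.le
          have h1 : |a ^ α - b ^ α| * a ≤ α * (b - a) * (b ^ α + a ^ α) := by
            rw [abs_sub_comm, abs_of_nonneg (by linarith)]
            exact key_ineq ha hab hα
          have h2 : b - a ≤ ‖r - s‖ := by
            rw [abs_sub_comm] at hd
            exact (le_abs_self _).trans hd
          have h3 : α * (b - a) * (b ^ α + a ^ α) ≤ α * ‖r - s‖ * (a ^ α + b ^ α) := by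
            rw [show b ^ α + a ^ α = a ^ α + b ^ α by ring]
            apply mul_le_mul_of_nonneg_right _ (by linarith)
            exact mul_le_mul_of_nonneg_left h2 hα.le
          linarith
      _ ≤ (p - 1) * ‖r - s‖ * (b ^ α + a ^ α) := by
          have hp1 : p - 1 = α + 1 := by rw [hαdef]; ring
          rw [hp1]
          nlinarith [mul_nonneg hdn hA]
end

section
/- Let p: E → [1,∞) be a measurable exponent function on a measurable set E with 1 < p_- ≤ p_+ < ∞, where p_- and p_+ are the essential infimum and supremum of p. If f is measurable on E with ‖f‖_{L^{p(·)}(E)} finite, then ‖|f|^{p(·)−1}‖_{L^{p'(·)}(E)} ≤ ‖f‖_{L^{p(·)}(E)}^{b_*−1}, where b_* = p_- if ‖f‖_{L^{p(·)}(E)} < 1 and b_* = p_+ otherwise. -/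
/-! For every `μ > ‖f‖_{p(·)}` the modular `∫ (|f|/μ)^{p(x)}` is at most `1`. Pointwise,
`(|f|^{p-1} / μ^{b-1})^{p'} = |f|^p / μ^{(b-1)p'} ≤ (|f|/μ)^p` as soon as `μ^p ≤ μ^{(b-1)p'}`,
which holds for `μ ≤ 1` when `b ≤ p` and for `μ ≥ 1` when `p ≤ b`. So
`‖|f|^{p-1}‖_{p'(·)} ≤ μ^{b-1}`, with `b = p₋` for `μ ∈ (‖f‖, 1)` and `b = p₊` for `μ > ‖f‖ ≥ 1`;
letting `μ ↓ ‖f‖` gives the bound. -/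

open MeasureTheory ENNReal

/-- The variable Lebesgue norm `‖f‖_{L^{p(·)}(E)}`. -/
noncomputable def vNorm {d : ℕ} (E : Set (EuclideanSpace ℝ (Fin d)))
    (p f : EuclideanSpace ℝ (Fin d) → ℝ) : ℝ≥0∞ :=
  sInf {t : ℝ≥0∞ | 0 < t ∧ ∫⁻ x in E, ((‖f x‖₊ : ℝ≥0∞) / t) ^ (p x) ≤ 1}

lemma le_rpow_of_forall_mem_Ioo_le_rpow {x y z : ℝ≥0∞} {c : ℝ} (hc : 0 < c) (hyz : y < z)
    (h : ∀ μ, y < μ → μ < z → x ≤ μ ^ c) : x ≤ y ^ c := by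
  refine le_of_forall_gt_imp_ge_of_dense fun w hw => ?_
  have hyw : y < w ^ c⁻¹ := by
    simpa [rpow_rpow_inv hc.ne'] using rpow_lt_rpow hw (inv_pos.2 hc)
  obtain ⟨μ, hyμ, hμ⟩ := exists_between (lt_min hyw hyz)
  calc x ≤ μ ^ c := h μ hyμ (hμ.trans_le (min_le_right _ _))
    _ ≤ (w ^ c⁻¹) ^ c := rpow_le_rpow (hμ.le.trans (min_le_left _ _)) hc.le
    _ = w := rpow_inv_rpow hc.ne' w

lemma rpow_conj_div_rpow_le {A μ : ℝ≥0∞} {P c : ℝ} (hP : 1 < P)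
    (hμ : μ ^ P ≤ μ ^ (c * (P / (P - 1)))) :
    (A ^ (P - 1) / μ ^ c) ^ (P / (P - 1)) ≤ (A / μ) ^ P := by
  have hcancel : (P - 1) * (P / (P - 1)) = P := mul_div_cancel₀ P (by linarith)
  rw [div_rpow_of_nonneg _ _ (div_nonneg (by linarith) (by linarith)),
    div_rpow_of_nonneg _ _ (by linarith), ← rpow_mul, ← rpow_mul, hcancel]
  exact ENNReal.div_le_div_left hμ _

lemma rpow_le_rpow_sub_one_mul_conj_of_le_one {μ : ℝ≥0∞} {P b : ℝ} (hμ : μ ≤ 1) (hb : b ≤ P)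
    (hP : 1 < P) : μ ^ P ≤ μ ^ ((b - 1) * (P / (P - 1))) := by
  refine rpow_le_rpow_of_exponent_ge hμ ?_
  calc (b - 1) * (P / (P - 1)) ≤ (P - 1) * (P / (P - 1)) := by gcongr
    _ = P := mul_div_cancel₀ P (by linarith)

lemma rpow_le_rpow_sub_one_mul_conj_of_one_le {μ : ℝ≥0∞} {P b : ℝ} (hμ : 1 ≤ μ) (hb : P ≤ b)
    (hP : 1 < P) : μ ^ P ≤ μ ^ ((b - 1) * (P / (P - 1))) := by
  refine rpow_le_rpow_of_exponent_le hμ ?_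
  calc P = (P - 1) * (P / (P - 1)) := (mul_div_cancel₀ P (by linarith)).symm
    _ ≤ (b - 1) * (P / (P - 1)) := by gcongr

section vNorm

variable {d : ℕ} {E : Set (EuclideanSpace ℝ (Fin d))} {p f : EuclideanSpace ℝ (Fin d) → ℝ}

lemma vNorm_le_of_lintegral_le_one {t : ℝ≥0∞} (ht : 0 < t)
    (h : ∫⁻ x in E, ((‖f x‖₊ : ℝ≥0∞) / t) ^ (p x) ≤ 1) : vNorm E p f ≤ t :=
  sInf_le ⟨ht, h⟩

lemma vNorm_eq_zero_of_volume_eq_zero (hE : volume E = 0) : vNorm E p f = 0 :=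
  le_antisymm (le_of_forall_gt_imp_ge_of_dense fun _ ht =>
    vNorm_le_of_lintegral_le_one ht (by simp [Measure.restrict_eq_zero.2 hE])) zero_le

lemma lintegral_div_rpow_le_one_of_vNorm_lt {μ : ℝ≥0∞}
    (hp : ∀ᵐ x ∂volume.restrict E, 0 ≤ p x) (hμ : vNorm E p f < μ) :
    ∫⁻ x in E, ((‖f x‖₊ : ℝ≥0∞) / μ) ^ (p x) ≤ 1 := by
  obtain ⟨t, ⟨-, ht⟩, htμ⟩ := sInf_lt_iff.1 hμ
  refine le_trans (lintegral_mono_ae ?_) ht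
  filter_upwards [hp] with x hx
  exact rpow_le_rpow (ENNReal.div_le_div_left htμ.le _) hx

lemma vNorm_abs_rpow_sub_one_le {μ : ℝ≥0∞} {c : ℝ} (hp : ∀ᵐ x ∂volume.restrict E, 1 < p x)
    (hμ : vNorm E p f < μ) (hμ_top : μ ≠ ⊤)
    (hμc : ∀ᵐ x ∂volume.restrict E, μ ^ p x ≤ μ ^ (c * (p x / (p x - 1)))) :
    vNorm E (fun x => p x / (p x - 1)) (fun x => |f x| ^ (p x - 1)) ≤ μ ^ c := by
  refine vNorm_le_of_lintegral_le_one (rpow_pos (pos_of_gt hμ) hμ_top) ?_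
  refine le_trans (lintegral_mono_ae ?_)
    (lintegral_div_rpow_le_one_of_vNorm_lt (hp.mono fun x hx => by linarith) hμ)
  filter_upwards [hp, hμc] with x hx hxc
  rw [Real.nnnorm_rpow_of_nonneg (abs_nonneg _), Real.nnnorm_abs,
    coe_rpow_of_nonneg _ (by linarith)]
  exact rpow_conj_div_rpow_le hx hxc

end vNorm

theorem stmt10_general {d : ℕ} (E : Set (EuclideanSpace ℝ (Fin d)))
    (p : EuclideanSpace ℝ (Fin d) → ℝ)
    (pm pM : ℝ) (hpm1 : 1 < pm)
    (hbounds : ∀ᵐ x ∂(volume.restrict E), pm ≤ p x ∧ p x ≤ pM)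
    (f : EuclideanSpace ℝ (Fin d) → ℝ)
    (hfin : vNorm E p f < ⊤) :
    vNorm E (fun x => p x / (p x - 1)) (fun x => |f x| ^ (p x - 1)) ≤
      (vNorm E p f) ^ ((if vNorm E p f < 1 then pm else pM) - 1) := by
  have hp : ∀ᵐ x ∂volume.restrict E, 1 < p x := hbounds.mono fun x hx => hpm1.trans_le hx.1
  split_ifs with hv
  · refine le_rpow_of_forall_mem_Ioo_le_rpow (by linarith) hv fun μ hvμ hμ1 => ?_
    refine vNorm_abs_rpow_sub_one_le hp hvμ (hμ1.trans one_lt_top).ne ?_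
    filter_upwards [hbounds, hp] with x hx hx1
    exact rpow_le_rpow_sub_one_mul_conj_of_le_one hμ1.le hx.1 hx1
  · have hE_ne : volume.restrict E ≠ 0 := fun h => hv <| by
      simp [vNorm_eq_zero_of_volume_eq_zero (Measure.restrict_eq_zero.1 h)]
    have : (ae (volume.restrict E)).NeBot := ae_neBot.2 hE_ne
    obtain ⟨x₀, hx₀⟩ := hbounds.exists
    refine le_rpow_of_forall_mem_Ioo_le_rpow (by linarith [hx₀.1, hx₀.2]) hfin fun μ hvμ hμ => ?_
    refine vNorm_abs_rpow_sub_one_le hp hvμ hμ.ne ?_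
    filter_upwards [hbounds, hp] with x hx hx1
    exact rpow_le_rpow_sub_one_mul_conj_of_one_le ((not_lt.1 hv).trans hvμ.le) hx.2 hx1

/-- If `1 < p₋ ≤ p(·) ≤ p₊ < ∞` and `‖f‖_{L^{p(·)}(E)}` is finite, then
`‖ |f|^{p(·)−1} ‖_{L^{p'(·)}(E)} ≤ ‖f‖_{L^{p(·)}(E)}^{b⁎−1}`, where `b⁎ = p₋` if
`‖f‖ < 1` and `b⁎ = p₊` otherwise. -/
theorem stmt10 {d : ℕ} (E : Set (EuclideanSpace ℝ (Fin d))) (hE : MeasurableSet E)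
    (p : EuclideanSpace ℝ (Fin d) → ℝ) (hpm : Measurable p)
    (pm pM : ℝ) (hpm1 : 1 < pm)
    (hbounds : ∀ᵐ x ∂(volume.restrict E), pm ≤ p x ∧ p x ≤ pM)
    (f : EuclideanSpace ℝ (Fin d) → ℝ) (hf : Measurable f)
    (hfin : vNorm E p f < ⊤) :
    vNorm E (fun x => p x / (p x - 1)) (fun x => |f x| ^ (p x - 1)) ≤
      (vNorm E p f) ^ ((if vNorm E p f < 1 then pm else pM) - 1) :=
  stmt10_general E p pm pM hpm1 hbounds f hfin
end

section
/- Let Q: E → S_n be a measurable positive semi-definite self-adjoint matrix function with measurable eigenvalue functions λ_1,...,λ_n and measurable orthonormal eigenvector functions v_1,...,v_n. For a measurable vector field f: E → R^n with components f̃_j = f^T v_j, the norm equivalence (1/n)·Σ_{j=1}^n ‖f̃_j λ_j^{1/2}‖_{L^{p(·)}(E)} ≤ ‖|√Q f|‖_{L^{p(·)}(E)} ≤ Σ_{j=1}^n ‖f̃_j λ_j^{1/2}‖_{L^{p(·)}(E)} holds. -/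
/-!
In an orthonormal eigenbasis of `Q(x)` the quadratic form is `fᵀQf = Σⱼ λⱼ f̃ⱼ²`, so `|√Q f|` is
the Euclidean length of the vector `(f̃ⱼ λⱼ^{1/2})ⱼ`: it dominates every coordinate and is dominated
by the sum of their absolute values. The variable Lebesgue (Luxemburg) norm is monotone in `|f|`,
and since `t ↦ t^{p(x)}` is convex for `p ≥ 1` it satisfies the triangle inequality; the two
pointwise bounds therefore pass to the norms.
-/

open MeasureTheory ENNReal Matrix

noncomputable def luxemburgNorm {α F : Type*} [MeasurableSpace α] [SeminormedAddGroup F]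
    (μ : Measure α) (p : α → ℝ) (f : α → F) : ℝ≥0∞ :=
  sInf {t : ℝ≥0∞ | 0 < t ∧ ∫⁻ x, ((‖f x‖₊ : ℝ≥0∞) / t) ^ (p x) ∂μ ≤ 1}

theorem vNorm_eq_luxemburgNorm {d : ℕ} (E : Set (EuclideanSpace ℝ (Fin d)))
    (p f : EuclideanSpace ℝ (Fin d) → ℝ) : vNorm E p f = luxemburgNorm (volume.restrict E) p f :=
  rfl

section LuxemburgNorm

variable {α F G : Type*} [MeasurableSpace α] [SeminormedAddCommGroup F] [SeminormedAddCommGroup G]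
  {μ : Measure α} {p : α → ℝ}

theorem luxemburgNorm_mono (hp : ∀ x, 0 ≤ p x) {f : α → F} {g : α → G}
    (hfg : ∀ x, ‖f x‖ ≤ ‖g x‖) :
    luxemburgNorm μ p f ≤ luxemburgNorm μ p g := by
  refine sInf_le_sInf fun t ⟨ht, hg⟩ => ⟨ht, le_trans (lintegral_mono fun x => ?_) hg⟩
  gcongr
  · exact hp x
  · exact_mod_cast hfg x

@[simp]
theorem luxemburgNorm_norm (f : α → F) :
    luxemburgNorm μ p (fun x => ‖f x‖) = luxemburgNorm μ p f := by
  simp only [luxemburgNorm, nnnorm_norm]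

theorem luxemburgNorm_zero (hp : ∀ x, 0 < p x) : luxemburgNorm μ p (0 : α → F) = 0 := by
  refine le_antisymm (ENNReal.le_of_forall_pos_le_add fun ε hε _ => sInf_le ⟨?_, ?_⟩) zero_le
  · simpa using hε
  · simp [ENNReal.zero_rpow_of_pos (hp _)]

theorem luxemburgNorm_add_le (hp : AEMeasurable p μ) (hp1 : ∀ x, 1 ≤ p x) {f g : α → F}
    (hf : AEStronglyMeasurable f μ) :
    luxemburgNorm μ p (f + g) ≤ luxemburgNorm μ p f + luxemburgNorm μ p g := by
  simp only [luxemburgNorm, sInf_eq_iInf']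
  refine le_iInf_add_iInf fun ⟨s, hs0, hs⟩ ⟨t, ht0, ht⟩ => ?_
  -- `s + t` is admissible for `f + g`: apply convexity of `· ^ p x` with weights `s / (s + t)`
  -- and `t / (s + t)` to `‖f x‖ / s` and `‖g x‖ / t`.
  rcases eq_or_ne s ∞ with rfl | hs_top
  · simp
  rcases eq_or_ne t ∞ with rfl | ht_top
  · simp
  have hst : s + t ≠ 0 := (add_pos_of_pos_of_nonneg hs0 zero_le).ne'
  have hst_top : s + t ≠ ∞ := add_ne_top.2 ⟨hs_top, ht_top⟩
  have hweight : ∀ a u : ℝ≥0∞, u ≠ 0 → u ≠ ∞ → u / (s + t) * (a / u) = a / (s + t) :=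
    fun a u hu hu_top => by
      rw [div_eq_mul_inv, div_eq_mul_inv, div_eq_mul_inv,
        show u * (s + t)⁻¹ * (a * u⁻¹) = a * (s + t)⁻¹ * (u * u⁻¹) by ring,
        ENNReal.mul_inv_cancel hu hu_top, mul_one]
  have hF : AEMeasurable (fun x => ((‖f x‖₊ : ℝ≥0∞) / s) ^ p x) μ := by
    simpa only [enorm_eq_nnnorm] using (hf.enorm.div_const s).pow hp
  refine iInf_le_of_le ⟨s + t, pos_iff_ne_zero.2 hst, ?_⟩ le_rfl
  calc ∫⁻ x, ((‖(f + g) x‖₊ : ℝ≥0∞) / (s + t)) ^ p x ∂μ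
      ≤ ∫⁻ x, s / (s + t) * ((‖f x‖₊ : ℝ≥0∞) / s) ^ p x
          + t / (s + t) * ((‖g x‖₊ : ℝ≥0∞) / t) ^ p x ∂μ := by
        refine lintegral_mono fun x => ?_
        calc ((‖(f + g) x‖₊ : ℝ≥0∞) / (s + t)) ^ p x
            ≤ (s / (s + t) * ((‖f x‖₊ : ℝ≥0∞) / s)
                + t / (s + t) * ((‖g x‖₊ : ℝ≥0∞) / t)) ^ p x := by
              rw [hweight _ _ hs0.ne' hs_top, hweight _ _ ht0.ne' ht_top, ENNReal.div_add_div_same]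
              gcongr
              · exact zero_le_one.trans (hp1 x)
              · exact_mod_cast nnnorm_add_le (f x) (g x)
          _ ≤ _ := ENNReal.rpow_arith_mean_le_arith_mean2_rpow _ _ _ _
                (by rw [ENNReal.div_add_div_same, ENNReal.div_self hst hst_top]) (hp1 x)
    _ = s / (s + t) * ∫⁻ x, ((‖f x‖₊ : ℝ≥0∞) / s) ^ p x ∂μ
          + t / (s + t) * ∫⁻ x, ((‖g x‖₊ : ℝ≥0∞) / t) ^ p x ∂μ := by
        rw [lintegral_add_left' (hF.const_mul _), lintegral_const_mul'' _ hF,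
          lintegral_const_mul' _ _ (ENNReal.div_lt_top ht_top hst).ne]
    _ ≤ s / (s + t) * 1 + t / (s + t) * 1 := by gcongr
    _ = 1 := by rw [mul_one, mul_one, ENNReal.div_add_div_same, ENNReal.div_self hst hst_top]

theorem luxemburgNorm_sum_le (hp : AEMeasurable p μ) (hp1 : ∀ x, 1 ≤ p x) {ι : Type*} (s : Finset ι)
    {f : ι → α → F} (hf : ∀ i ∈ s, AEStronglyMeasurable (f i) μ) :
    luxemburgNorm μ p (∑ i ∈ s, f i) ≤ ∑ i ∈ s, luxemburgNorm μ p (f i) := by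
  classical
  induction s using Finset.induction_on with
  | empty => simp [luxemburgNorm_zero fun x => zero_lt_one.trans_le (hp1 x)]
  | insert i s hi ih =>
    rw [Finset.sum_insert hi, Finset.sum_insert hi]
    refine (luxemburgNorm_add_le hp hp1 (hf i (s.mem_insert_self i))).trans (add_le_add_right ?_ _)
    exact ih fun j hj => hf j (Finset.mem_insert_of_mem hj)

theorem luxemburgNorm_le_sum_of_norm_le_sum (hp : AEMeasurable p μ) (hp1 : ∀ x, 1 ≤ p x) {ι : Type*}
    (s : Finset ι) {f : ι → α → F} (hf : ∀ i ∈ s, AEStronglyMeasurable (f i) μ) {g : α → G}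
    (hg : ∀ x, ‖g x‖ ≤ ∑ i ∈ s, ‖f i x‖) :
    luxemburgNorm μ p g ≤ ∑ i ∈ s, luxemburgNorm μ p (f i) :=
  calc luxemburgNorm μ p g
      ≤ luxemburgNorm μ p (∑ i ∈ s, fun x => ‖f i x‖ : α → ℝ) := by
        refine luxemburgNorm_mono (fun x => zero_le_one.trans (hp1 x)) fun x => ?_
        rw [Finset.sum_apply, Real.norm_of_nonneg (s.sum_nonneg fun i _ => norm_nonneg _)]
        exact hg x
    _ ≤ ∑ i ∈ s, luxemburgNorm μ p (fun x => ‖f i x‖) :=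
        luxemburgNorm_sum_le hp hp1 s fun i hi => (hf i hi).norm
    _ = ∑ i ∈ s, luxemburgNorm μ p (f i) := by simp only [luxemburgNorm_norm]

end LuxemburgNorm

theorem ENNReal.inv_card_mul_sum_le {ι : Type*} (s : Finset ι) {a : ι → ℝ≥0∞} {b : ℝ≥0∞}
    (h : ∀ i ∈ s, a i ≤ b) : (s.card : ℝ≥0∞)⁻¹ * ∑ i ∈ s, a i ≤ b := by
  rcases s.eq_empty_or_nonempty with rfl | hs
  · simp
  rw [ENNReal.inv_mul_le_iff (by simpa using hs.ne_empty) (natCast_ne_top _), ← nsmul_eq_mul]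
  exact s.sum_le_card_nsmul a b h

section Eigenbasis

variable {ι R : Type*} [Fintype ι] [DecidableEq ι] [CommRing R] {v : ι → ι → R}

theorem sum_dotProduct_smul_of_orthonormal (hv : ∀ i j, v i ⬝ᵥ v j = if i = j then 1 else 0)
    (x : ι → R) : ∑ j, (x ⬝ᵥ v j) • v j = x := by
  have hV : Matrix.of v * (Matrix.of v)ᵀ = 1 := by
    ext i j
    simpa [Matrix.mul_apply, Matrix.one_apply, dotProduct] using hv i j
  calc ∑ j, (x ⬝ᵥ v j) • v j = x ᵥ* (Matrix.of v)ᵀ ᵥ* Matrix.of v := by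
        rw [vecMul_transpose, vecMul_eq_sum]
        exact Finset.sum_congr rfl fun j _ => by rw [dotProduct_comm]; rfl
    _ = x := by rw [vecMul_vecMul, mul_eq_one_comm.1 hV, vecMul_one]

theorem dotProduct_mulVec_eq_sum_mul_sq_of_eigenbasis
    (hv : ∀ i j, v i ⬝ᵥ v j = if i = j then 1 else 0) {Q : Matrix ι ι R} {lam : ι → R}
    (heig : ∀ j, Q *ᵥ v j = lam j • v j) (x : ι → R) :
    x ⬝ᵥ Q *ᵥ x = ∑ j, lam j * (x ⬝ᵥ v j) ^ 2 := by
  have hQx : Q *ᵥ x = ∑ j, ((x ⬝ᵥ v j) * lam j) • v j := by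
    conv_lhs => rw [← sum_dotProduct_smul_of_orthonormal hv x]
    simp only [mulVec_sum, mulVec_smul, heig, smul_smul]
  rw [hQx, dotProduct_sum]
  refine Finset.sum_congr rfl fun j _ => ?_
  rw [dotProduct_smul, smul_eq_mul]
  ring

end Eigenbasis

theorem Real.abs_le_sqrt_sum_sq {ι : Type*} [Fintype ι] (a : ι → ℝ) (i : ι) :
    |a i| ≤ √(∑ j, a j ^ 2) :=
  Real.abs_le_sqrt (Finset.single_le_sum (fun j _ => sq_nonneg (a j)) (Finset.mem_univ i))

theorem Real.sqrt_sum_sq_le_sum_abs {ι : Type*} [Fintype ι] (a : ι → ℝ) :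
    √(∑ j, a j ^ 2) ≤ ∑ j, |a j| := by
  rw [Real.sqrt_le_left (Finset.sum_nonneg fun j _ => abs_nonneg _)]
  simpa only [sq_abs] using Finset.sum_sq_le_sq_sum_of_nonneg fun j _ => abs_nonneg (a j)

theorem stmt14_general {d n : ℕ} (E : Set (EuclideanSpace ℝ (Fin d)))
    (p : EuclideanSpace ℝ (Fin d) → ℝ) (hp : Measurable p)
    (hp1 : ∀ x, 1 ≤ p x)
    (Q : EuclideanSpace ℝ (Fin d) → Matrix (Fin n) (Fin n) ℝ)
    (lam : Fin n → EuclideanSpace ℝ (Fin d) → ℝ)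
    (v : Fin n → EuclideanSpace ℝ (Fin d) → (Fin n → ℝ))
    (hlam : ∀ j, Measurable (lam j)) (hv : ∀ j, Measurable (v j))
    (hlamnn : ∀ j x, 0 ≤ lam j x)
    (hortho : ∀ x i j, v i x ⬝ᵥ v j x = if i = j then (1 : ℝ) else 0)
    (heig : ∀ j x, (Q x).mulVec (v j x) = lam j x • v j x)
    (f : EuclideanSpace ℝ (Fin d) → (Fin n → ℝ)) (hf : Measurable f) :
    (n : ℝ≥0∞)⁻¹ *
        ∑ j, vNorm E p (fun x => (f x ⬝ᵥ v j x) * Real.sqrt (lam j x)) ≤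
      vNorm E p (fun x => Real.sqrt (f x ⬝ᵥ (Q x).mulVec (f x))) ∧
    vNorm E p (fun x => Real.sqrt (f x ⬝ᵥ (Q x).mulVec (f x))) ≤
      ∑ j, vNorm E p (fun x => (f x ⬝ᵥ v j x) * Real.sqrt (lam j x)) := by
  set h : Fin n → EuclideanSpace ℝ (Fin d) → ℝ := fun j x => (f x ⬝ᵥ v j x) * √(lam j x)
  have hquad : ∀ x, √(f x ⬝ᵥ Q x *ᵥ f x) = √(∑ j, h j x ^ 2) := fun x => by
    rw [dotProduct_mulVec_eq_sum_mul_sq_of_eigenbasis (hortho x) (fun j => heig j x)]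
    congr 1
    refine Finset.sum_congr rfl fun j _ => ?_
    rw [mul_pow, Real.sq_sqrt (hlamnn j x), mul_comm]
  have hh : ∀ j, Measurable (h j) := fun j => by
    simp only [h, dotProduct]
    fun_prop
  simp only [vNorm_eq_luxemburgNorm]
  constructor
  · refine (ENNReal.inv_card_mul_sum_le (Finset.univ : Finset (Fin n))
      (a := fun j => luxemburgNorm _ p (h j)) fun j _ => ?_).trans_eq'
      (by rw [Finset.card_univ, Fintype.card_fin])
    refine luxemburgNorm_mono (fun x => zero_le_one.trans (hp1 x)) fun x => ?_
    rw [hquad, Real.norm_of_nonneg (Real.sqrt_nonneg _), Real.norm_eq_abs]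
    exact Real.abs_le_sqrt_sum_sq (h · x) j
  · refine luxemburgNorm_le_sum_of_norm_le_sum hp.aemeasurable hp1 Finset.univ
      (fun j _ => (hh j).aestronglyMeasurable) fun x => ?_
    rw [hquad, Real.norm_of_nonneg (Real.sqrt_nonneg _)]
    simpa only [Real.norm_eq_abs] using Real.sqrt_sum_sq_le_sum_abs (h · x)

/-- For a measurable positive semi-definite matrix function `Q` with measurable
eigenvalues `λⱼ` and measurable orthonormal eigenvectors `vⱼ`, and a measurable
vector field `f` with components `f̃ⱼ = fᵀvⱼ`, the norm equivalence
`(1/n) Σⱼ ‖f̃ⱼ λⱼ^{1/2}‖_{L^{p(·)}(E)} ≤ ‖ |√Q f| ‖_{L^{p(·)}(E)}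
  ≤ Σⱼ ‖f̃ⱼ λⱼ^{1/2}‖_{L^{p(·)}(E)}` holds, where `|√Q f| = (fᵀQf)^{1/2}`. -/
theorem stmt14 {d n : ℕ} (E : Set (EuclideanSpace ℝ (Fin d))) (hE : MeasurableSet E)
    (p : EuclideanSpace ℝ (Fin d) → ℝ) (hp : Measurable p)
    (hp1 : ∀ x, 1 ≤ p x)
    (Q : EuclideanSpace ℝ (Fin d) → Matrix (Fin n) (Fin n) ℝ)
    (hQmeas : ∀ i j, Measurable (fun x => Q x i j)) (hQ : ∀ x, (Q x).PosSemidef)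
    (lam : Fin n → EuclideanSpace ℝ (Fin d) → ℝ)
    (v : Fin n → EuclideanSpace ℝ (Fin d) → (Fin n → ℝ))
    (hlam : ∀ j, Measurable (lam j)) (hv : ∀ j, Measurable (v j))
    (hlamnn : ∀ j x, 0 ≤ lam j x)
    (hortho : ∀ x i j, v i x ⬝ᵥ v j x = if i = j then (1 : ℝ) else 0)
    (heig : ∀ j x, (Q x).mulVec (v j x) = lam j x • v j x)
    (f : EuclideanSpace ℝ (Fin d) → (Fin n → ℝ)) (hf : Measurable f) :
    (n : ℝ≥0∞)⁻¹ *
        ∑ j, vNorm E p (fun x => (f x ⬝ᵥ v j x) * Real.sqrt (lam j x)) ≤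
      vNorm E p (fun x => Real.sqrt (f x ⬝ᵥ (Q x).mulVec (f x))) ∧
    vNorm E p (fun x => Real.sqrt (f x ⬝ᵥ (Q x).mulVec (f x))) ≤
      ∑ j, vNorm E p (fun x => (f x ⬝ᵥ v j x) * Real.sqrt (lam j x)) :=
  stmt14_general E p hp hp1 Q lam v hlam hv hlamnn hortho heig f hf
end
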